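/- arXiv:1501.00509 — 2 statements merged into one kernel-verified Lean document; each statement's English description precedes it below -/
import Mathlib

section
/- Let T(z) = Σ_{n≥1} n^{n-2} z^n/n! be the exponential generating function of labelled trees and T^•(z) = z T'(z) its Euler derivative. Then T^•(z) − (1/2)(T^•(z))^2 = T(z) as formal power series. -/
/-!
Multiplying the `n`-th coefficients by `n!`, for `n ≥ 1` the claim reads
`n^(n-1) - ½ ∑_{0<k<n} C(n,k) k^(k-1) (n-k)^(n-k-1) = n^(n-2)`,
so it suffices that the binomial convolution of rooted-tree counts is `2 (n-1) n^(n-2)`.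
Multiplying by `n = k + (n-k)` and using the symmetry `k ↔ n - k`, this reduces to
`∑_{0<k≤n} C(n,k) k^(k-1) (n-k)^(n-k) = n^n`, the value at `x = 0` of the polynomial identity
`∑_{0<k≤n} C(n,k) k^(k-1) (x+n-k)^(n-k) = n (x+n)^(n-1)`.
The latter follows by induction on `n`: differentiating the left side for `n + 1` gives `n + 1`
times the left side for `n` shifted by one, and at `x = -(n+1)` it is an `(n+1)`-st finite
difference of `x ↦ x^n`, hence zero.
-/

open PowerSeries

/-- The EGF of labelled trees, `T(z) = Σ_{n≥1} n^{n-2} z^n/n!`. -/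
noncomputable def Ttree : PowerSeries ℝ :=
  PowerSeries.mk fun n => if n = 0 then 0 else (n : ℝ) ^ (n - 2) / (Nat.factorial n)

/-- The EGF of rooted labelled trees, `T^•(z) = z T'(z) = Σ_{n≥1} n^{n-1} z^n/n!`. -/
noncomputable def Tdot : PowerSeries ℝ :=
  PowerSeries.X * PowerSeries.derivativeFun Ttree

open Finset
open scoped Nat

theorem sum_range_neg_one_pow_mul_choose_mul_pow_eq_zero {R : Type*} [CommRing R] {j n : ℕ}
    (h : j < n) : ∑ k ∈ range (n + 1), (-1 : R) ^ (n - k) * n.choose k * (k : R) ^ j = 0 := by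
  have := congrFun (fwdDiff_iter_pow_eq_zero_of_lt (R := R) h) 0
  rw [fwdDiff_iter_eq_sum_shift] at this
  simpa [zsmul_eq_mul] using this

namespace Polynomial

variable {R : Type*} [CommRing R]

theorem eq_of_derivative_eq_of_eval_eq [IsAddTorsionFree R] {p q : R[X]}
    (hd : derivative p = derivative q) {x : R} (hx : p.eval x = q.eval x) : p = q := by
  have hc := eq_C_of_derivative_eq_zero (p := p - q) (by rw [derivative_sub, hd, sub_self])
  have h0 : (p - q).coeff 0 = 0 := by simpa [hx] using (congrArg (eval x) hc).symm
  rw [← sub_eq_zero, hc, h0, C_0]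

/-- The `x`-derivative at `x = 0` of the left side of Abel's identity
`∑_k C(n,k) x (x+k)^(k-1) (y+n-k)^(n-k) = (x+y+n)^n`. -/
noncomputable def abelSum (n : ℕ) : R[X] :=
  ∑ k ∈ Ioc 0 n,
    C ((n.choose k : R) * (k : R) ^ (k - 1)) * (X + C ((n - k : ℕ) : R)) ^ (n - k)

theorem derivative_abelSum_succ (n : ℕ) :
    derivative (abelSum (n + 1) : R[X]) = C ((n + 1 : ℕ) : R) * (abelSum n).comp (X + 1) := by
  rw [abelSum, abelSum, derivative_sum, sum_Ioc_succ_top n.zero_le, sum_comp, mul_sum]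
  simp only [Nat.sub_self, pow_zero, mul_one, derivative_C, add_zero]
  refine sum_congr rfl fun k hk => ?_
  have hkn : k ≤ n := (mem_Ioc.mp hk).2
  have hshift :
      ((X : R[X]) + C ((n - k : ℕ) : R)).comp (X + 1) = X + C ((n - k + 1 : ℕ) : R) := by
    rw [add_comp, X_comp, C_comp, add_assoc, ← C_1, ← C_add, Nat.cast_succ, add_comm 1]
  have hchoose : ((n + 1).choose k : R) * ((n - k + 1 : ℕ) : R) = (n + 1 : ℕ) * n.choose k := by
    rw [mul_comm ((n + 1 : ℕ) : R), ← Nat.sub_add_comm hkn]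
    exact_mod_cast congrArg (Nat.cast : ℕ → R) (Nat.choose_mul_succ_eq n k).symm
  rw [derivative_C_mul, derivative_pow, derivative_add, derivative_X, derivative_C, add_zero,
    mul_one, mul_comp, C_comp, pow_comp, hshift, Nat.sub_add_comm hkn, Nat.add_sub_cancel]
  simp only [← mul_assoc, ← C_mul]
  congr 2
  linear_combination (k : R) ^ (k - 1) * hchoose

theorem eval_neg_abelSum_succ {n : ℕ} (hn : n ≠ 0) :
    (abelSum (n + 1) : R[X]).eval (-((n + 1 : ℕ) : R)) = 0 := by
  have hterm : ∀ k ∈ range (n + 2), ((n + 1).choose k : R) * (k : R) ^ (k - 1) *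
      (-((n + 1 : ℕ) : R) + ((n + 1 - k : ℕ) : R)) ^ (n + 1 - k) =
      (-1) ^ (n + 1 - k) * (n + 1).choose k * (k : R) ^ n := by
    intro k hk
    rcases Nat.eq_zero_or_pos k with rfl | hk0
    · simp [hn]
    have hkn : k ≤ n + 1 := Nat.lt_succ_iff.mp (mem_range.mp hk)
    have hpow : (k : R) ^ (k - 1) * (k : R) ^ (n + 1 - k) = (k : R) ^ n := by
      rw [← pow_add]; congr 1; omega
    rw [Nat.cast_sub hkn, neg_add_eq_sub, sub_sub_cancel_left, neg_pow, ← hpow]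
    ring
  rw [abelSum, eval_finsetSum]
  simp only [eval_mul, eval_C, eval_pow, eval_add, eval_X]
  have hzero : ∀ k ∈ range (n + 2), k ∉ Ioc 0 (n + 1) →
      ((n + 1).choose k : R) * (k : R) ^ (k - 1) *
        (-((n + 1 : ℕ) : R) + ((n + 1 - k : ℕ) : R)) ^ (n + 1 - k) = 0 := by
    intro k hk hk'
    obtain rfl : k = 0 := by simp only [mem_range, mem_Ioc] at hk hk'; omega
    simp
  rw [sum_subset (fun k hk => by simp only [mem_range, mem_Ioc] at hk ⊢; omega) hzero,
    sum_congr rfl hterm, sum_range_neg_one_pow_mul_choose_mul_pow_eq_zero n.lt_succ_self]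

theorem abelSum_eq [IsAddTorsionFree R] {n : ℕ} (hn : n ≠ 0) :
    (abelSum n : R[X]) = C (n : R) * (X + C (n : R)) ^ (n - 1) := by
  induction n with
  | zero => exact absurd rfl hn
  | succ n ih =>
    rcases eq_or_ne n 0 with rfl | hn
    · simp [abelSum]
    refine eq_of_derivative_eq_of_eval_eq ?_ (x := -((n + 1 : ℕ) : R)) ?_
    · rw [derivative_abelSum_succ, ih hn, mul_comp, C_comp, pow_comp, add_comp, X_comp, C_comp,
        derivative_C_mul, derivative_pow, derivative_add, derivative_X, derivative_C]
      simp only [Nat.add_sub_cancel, add_zero, mul_one, Nat.cast_succ, C_add, C_1]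
      ring
    · rw [eval_neg_abelSum_succ hn]
      simp [hn]

end Polynomial

open Polynomial in
theorem sum_choose_mul_pow_mul_pow_eq_pow {n : ℕ} (hn : n ≠ 0) :
    ∑ k ∈ Ioc 0 n, n.choose k * k ^ (k - 1) * (n - k) ^ (n - k) = n ^ n := by
  have h := congrArg (eval 0) (abelSum_eq (R := ℤ) hn)
  simp only [abelSum, eval_finsetSum, eval_mul, eval_C, eval_pow, eval_add, eval_X, zero_add,
    mul_pow_sub_one hn] at h
  exact_mod_cast h

theorem sum_choose_mul_pow_pred_mul_pow_pred (n : ℕ) :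
    ∑ k ∈ Ioo 0 n, n.choose k * k ^ (k - 1) * (n - k) ^ (n - k - 1) =
      2 * (n - 1) * n ^ (n - 2) := by
  rcases lt_or_ge n 2 with hn | hn
  · interval_cases n <;> rfl
  set A := ∑ k ∈ Ioo 0 n, n.choose k * k ^ (k - 1) * (n - k) ^ (n - k)
  have hA : A + n ^ (n - 1) = n ^ n := by
    rw [← sum_choose_mul_pow_mul_pow_eq_pow (n := n) (by omega), ← Ioo_insert_right (by omega),
      sum_insert (by simp), add_comm]
    simp [A]
  have hreflect : ∑ k ∈ Ioo 0 n, n.choose k * k ^ k * (n - k) ^ (n - k - 1) = A := by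
    refine sum_nbij' (n - ·) (n - ·) ?_ ?_ ?_ ?_ fun k hk => ?_ <;>
      try (intro k hk; simp only [mem_Ioo] at hk ⊢; omega)
    simp only [mem_Ioo] at hk
    rw [Nat.sub_sub_self hk.2.le, Nat.choose_symm hk.2.le, mul_right_comm]
  have hsplit : n * ∑ k ∈ Ioo 0 n, n.choose k * k ^ (k - 1) * (n - k) ^ (n - k - 1) =
      ∑ k ∈ Ioo 0 n, n.choose k * k ^ k * (n - k) ^ (n - k - 1) + A := by
    rw [mul_sum, ← sum_add_distrib]
    refine sum_congr rfl fun k hk => ?_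
    obtain ⟨hk0, hkn⟩ := mem_Ioo.mp hk
    rw [← mul_pow_sub_one hk0.ne' k, ← mul_pow_sub_one (Nat.sub_ne_zero_of_lt hkn) (n - k)]
    calc n * _ = (k + (n - k)) * (n.choose k * k ^ (k - 1) * (n - k) ^ (n - k - 1)) := by
          rw [Nat.add_sub_cancel' hkn.le]
      _ = _ := by ring
  refine Nat.eq_of_mul_eq_mul_left (by omega : 0 < n) ?_
  have hA' : A = (n - 1) * n ^ (n - 1) := by
    have : n ^ n = (n - 1) * n ^ (n - 1) + n ^ (n - 1) := by
      rw [← Nat.succ_mul, Nat.succ_eq_add_one, Nat.sub_add_cancel (by omega),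
        mul_pow_sub_one (by omega)]
    omega
  have hpow : n ^ (n - 1) = n * n ^ (n - 2) := by
    rw [show n - 1 = n - 2 + 1 by omega, pow_succ']
  rw [hsplit, hreflect, hA', hpow]
  ring

namespace PowerSeries

theorem coeff_X_mul_derivative {R : Type*} [CommSemiring R] (f : R⟦X⟧) (n : ℕ) :
    coeff n (X * d⁄dX R f) = n * coeff n f := by
  cases n with
  | zero => simp
  | succ n => rw [coeff_succ_X_mul, coeff_derivative, mul_comm, Nat.cast_succ]

theorem coeff_mk_div_factorial_mul {K : Type*} [Field K] [CharZero K] (a b : ℕ → K) (n : ℕ) :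
    coeff n (mk (fun i => a i / i !) * mk (fun i => b i / i !)) =
      (∑ k ∈ range (n + 1), n.choose k * a k * b (n - k)) / n ! := by
  rw [coeff_mul, Nat.sum_antidiagonal_eq_sum_range_succ (fun i j => coeff i _ * coeff j _),
    sum_div]
  refine sum_congr rfl fun k hk => ?_
  have hkn := mem_range_succ_iff.mp hk
  have hc : (n.choose k : K) ≠ 0 := by exact_mod_cast (Nat.choose_pos hkn).ne'
  simp only [coeff_mk]
  rw [← Nat.choose_mul_factorial_mul_factorial hkn]
  push_cast
  field_simp

end PowerSeries

theorem coeff_Tdot (n : ℕ) :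
    coeff n Tdot = (if n = 0 then 0 else (n : ℝ) ^ (n - 1)) / n ! := by
  change coeff n (X * d⁄dX ℝ Ttree) = _
  rw [coeff_X_mul_derivative, Ttree, coeff_mk]
  rcases n with _ | _ | n
  · simp
  · simp
  · simp only [if_neg (Nat.succ_ne_zero _), Nat.add_sub_cancel, mul_div_assoc']
    push_cast
    ring

theorem coeff_Tdot_sq (n : ℕ) :
    coeff n (Tdot ^ 2) = ((2 * (n - 1) * n ^ (n - 2) : ℕ) : ℝ) / n ! := by
  have hTdot : Tdot = mk fun i => (if i = 0 then 0 else (i : ℝ) ^ (i - 1)) / i ! :=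
    ext fun i => by rw [coeff_Tdot, coeff_mk]
  rw [hTdot, sq, coeff_mk_div_factorial_mul, ← sum_choose_mul_pow_pred_mul_pow_pred]
  congr 1
  push_cast
  rw [← sum_subset (s₁ := Ioo 0 n)
    (fun k hk => by simp only [mem_Ioo, mem_range] at hk ⊢; omega) ?_]
  · refine sum_congr rfl fun k hk => ?_
    obtain ⟨hk0, hkn⟩ := mem_Ioo.mp hk
    rw [if_neg hk0.ne', if_neg (by omega), Nat.cast_sub hkn.le]
  · intro k hk hk'
    simp only [mem_Ioo, mem_range] at hk hk'
    rcases Nat.eq_zero_or_pos k with rfl | hk0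
    · simp
    · simp [show n - k = 0 by omega]

/-- Dissymmetry theorem for trees: `T^•(z) − (1/2)(T^•(z))² = T(z)`. -/
theorem stmt_3 : Tdot - (1 / 2 : ℝ) • (Tdot ^ 2) = Ttree := by
  ext n
  rw [map_sub, coeff_smul, coeff_Tdot_sq, coeff_Tdot, Ttree, coeff_mk]
  rcases n with _ | _ | n
  · simp
  · simp
  · rw [if_neg (by omega), if_neg (by omega), smul_eq_mul, Nat.add_sub_cancel,
      show n + 1 + 1 - 2 = n by omega]
    push_cast
    field_simp
    ring
end

section
/- For 0 ≤ s < 1, the function T_1(z) = z + Σ_{n≥1} n^n z^{n+1}/(n+1)! satisfies T_1(s·e^{−s}) = 1 − e^{−s}. -/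
/-- `T_1(z) = z + Σ_{n≥1} n^n z^{n+1}/(n+1)!`, as a function of a real variable. -/
noncomputable def Tone (z : ℝ) : ℝ :=
  z + ∑' n : ℕ, ((n : ℝ) + 1) ^ (n + 1) * z ^ (n + 2) / (Nat.factorial (n + 2))

/-!
Put `z = s e^{-s}` and expand each `z^{m+1} = s^{m+1} e^{-(m+1)s}` as an exponential series.
This turns `T_1(z)` into a double series in `s`, absolutely convergent when `|s| e^{|s|} < 1/e`.
Summing it along antidiagonals, the coefficient of `s^{n+1}` is `(-1)^n/(n+1)!` by Abel's identity
`∑ₖ C(n,k) x (x+k)^{k-1} (y-k)^{n-k} = (x+y)^n` at `x = -1`, `y = 0`, so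
`T_1(s e^{-s}) = 1 - e^{-s}` near `s = 0`. Both sides are analytic in `s` on `[0, 1)`, where
`s e^{-s} < 1/e` stays inside the disc of convergence of `T_1`, so the identity holds on all of it.
-/

open Finset Real Nat Topology FormalMultilinearSeries

theorem sum_neg_one_pow_mul_choose_mul_add_pow_eq_zero {R : Type*} [CommRing R] {j n : ℕ}
    (h : j < n) (x : R) :
    ∑ k ∈ range (n + 1), (-1) ^ (n - k) * (n.choose k : R) * (x + k) ^ j = 0 := by
  have := fwdDiff_iter_eq_sum_shift 1 (fun r : R ↦ r ^ j) n x
  rw [fwdDiff_iter_pow_eq_zero_of_lt h] at this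
  simpa [zsmul_eq_mul, mul_assoc, eq_comm] using this

/-- Abel's sum `∑_{k ≤ n} C(n,k) x (x+k)^{k-1} (y-k)^{n-k}`, whose `k = 0` term `x x⁻¹ yⁿ` is
written as `yⁿ`. -/
noncomputable def abelSum (n : ℕ) (x y : ℝ) : ℝ :=
  x * ∑ k ∈ range n, (n.choose (k + 1) : ℝ) * (x + (k + 1)) ^ k * (y - (k + 1)) ^ (n - (k + 1))
    + y ^ n

theorem hasDerivAt_abelSum (n : ℕ) (x y : ℝ) :
    HasDerivAt (abelSum (n + 1) x) ((n + 1) * abelSum n x y) y := by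
  have hterm (k : ℕ) : HasDerivAt
      (fun y ↦ ((n + 1).choose (k + 1) : ℝ) * (x + (k + 1)) ^ k * (y - (k + 1)) ^ (n - k))
      ((n + 1) * ((n.choose (k + 1) : ℝ) * (x + (k + 1)) ^ k * (y - (k + 1)) ^ (n - (k + 1))))
      y := by
    have hc : (n + 1).choose (k + 1) * (n - k) = (n + 1) * n.choose (k + 1) := by
      rw [mul_comm (n + 1), Nat.choose_mul_succ_eq, Nat.add_sub_add_right]
    have hcR : ((n + 1).choose (k + 1) : ℝ) * (n - k : ℕ) = (n + 1) * n.choose (k + 1) := by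
      exact_mod_cast hc
    refine ((((hasDerivAt_id y).sub_const ((k : ℝ) + 1)).fun_pow (n - k)).const_mul
      (((n + 1).choose (k + 1) : ℝ) * (x + (k + 1)) ^ k)).congr_deriv ?_
    rw [id_eq, Nat.sub_sub, mul_one]
    linear_combination (x + (k + 1)) ^ k * (y - (k + 1)) ^ (n - (k + 1)) * hcR
  have hfun : abelSum (n + 1) x = fun y ↦ x * ∑ k ∈ range (n + 1),
      ((n + 1).choose (k + 1) : ℝ) * (x + (k + 1)) ^ k * (y - (k + 1)) ^ (n - k) + y ^ (n + 1) := by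
    funext y
    simp only [abelSum, Nat.add_sub_add_right]
  rw [hfun]
  refine (((HasDerivAt.fun_sum fun k _ ↦ hterm k).const_mul x).fun_add
    (hasDerivAt_pow (n + 1) y)).congr_deriv ?_
  simp only [abelSum, sum_range_succ, Nat.choose_succ_self, Nat.cast_zero, ← mul_sum]
  push_cast
  ring

theorem abelSum_succ_neg (n : ℕ) (x : ℝ) : abelSum (n + 1) x (-x) = 0 := by
  have hdiff := sum_neg_one_pow_mul_choose_mul_add_pow_eq_zero (Nat.lt_succ_self n) x
  rw [sum_range_succ'] at hdiff
  have hterm (k : ℕ) (hk : k ∈ range (n + 1)) :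
      ((n + 1).choose (k + 1) : ℝ) * (x + (k + 1)) ^ k * (-x - (k + 1)) ^ (n + 1 - (k + 1))
        = (-1) ^ (n + 1 - (k + 1)) * ((n + 1).choose (k + 1) : ℝ) * (x + (k + 1 : ℕ)) ^ n := by
    have hk : k ≤ n := Nat.lt_succ_iff.mp (mem_range.mp hk)
    rw [Nat.add_sub_add_right, show -x - (k + 1) = -1 * (x + (k + 1)) by ring, mul_pow]
    have hpow : (x + (k + 1)) ^ n = (x + (k + 1)) ^ k * (x + (k + 1)) ^ (n - k) := by
      rw [← pow_add, Nat.add_sub_cancel' hk]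
    push_cast
    rw [hpow]
    ring
  simp only [Nat.succ_eq_add_one, Nat.sub_zero, Nat.choose_zero_right, Nat.cast_zero, add_zero,
    Nat.cast_one, mul_one] at hdiff
  rw [abelSum, sum_congr rfl hterm]
  linear_combination x * hdiff

/-- Abel's identity: both sides have `y`-derivative `n` times their value for `n - 1`, and they
agree at `y = -x`. -/
theorem abelSum_eq (n : ℕ) (x y : ℝ) : abelSum n x y = (x + y) ^ n := by
  induction n generalizing y with
  | zero => simp [abelSum]
  | succ n ih =>
    have hderiv (y : ℝ) :
        HasDerivAt (fun y ↦ abelSum (n + 1) x y - (x + y) ^ (n + 1)) 0 y := by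
      refine ((hasDerivAt_abelSum n x y).sub
        (((hasDerivAt_id y).const_add x).pow (n + 1))).congr_deriv ?_
      rw [ih]
      push_cast
      simp
    have hconst := is_const_of_deriv_eq_zero (fun y ↦ (hderiv y).differentiableAt)
      (fun y ↦ (hderiv y).deriv) y (-x)
    simpa [abelSum_succ_neg, sub_eq_zero] using hconst

theorem sum_range_choose_mul_pow_self_mul_neg_pow (n : ℕ) :
    ∑ k ∈ range (n + 1), ((n + 1).choose (k + 1) : ℝ) * (k : ℝ) ^ k * (-(k + 1 : ℝ)) ^ (n - k)
      = (-1) ^ n := by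
  have h := abelSum_eq (n + 1) (-1) 0
  have hx (x : ℝ) : -1 + (x + 1) = x := by ring
  simp only [abelSum, Nat.add_sub_add_right, hx, zero_sub, zero_pow (Nat.succ_ne_zero n),
    add_zero, pow_succ] at h
  linear_combination -h

/-- `T_1(z) = ∑_{m ≥ 0} toneCoeff m * z^{m+1}`; the `m = 0` term is `z` because `0 ^ 0 = 1`. -/
noncomputable def toneCoeff (m : ℕ) : ℝ := m ^ m / (m + 1)!

theorem sum_antidiagonal_toneCoeff_mul_neg_pow (n : ℕ) :
    ∑ p ∈ antidiagonal n, toneCoeff p.1 * (-(p.1 + 1 : ℝ)) ^ p.2 / p.2 ! = (-1) ^ n / (n + 1)! := by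
  rw [Nat.sum_antidiagonal_eq_sum_range_succ_mk, ← sum_range_choose_mul_pow_self_mul_neg_pow,
    sum_div]
  refine sum_congr rfl fun k hk ↦ ?_
  have hk : k + 1 ≤ n + 1 := mem_range.mp hk
  have hfact : ((n + 1).choose (k + 1) : ℝ) * (k + 1)! * (n - k)! = (n + 1)! := by
    exact_mod_cast Nat.add_sub_add_right n 1 k ▸ Nat.choose_mul_factorial_mul_factorial hk
  have hchoose : ((n + 1).choose (k + 1) : ℝ) ≠ 0 := by exact_mod_cast (Nat.choose_pos hk).ne'
  rw [toneCoeff, ← hfact]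
  field_simp

theorem toneCoeff_nonneg (m : ℕ) : 0 ≤ toneCoeff m := by
  unfold toneCoeff
  positivity

theorem toneCoeff_le_exp_one_pow (m : ℕ) : toneCoeff m ≤ exp 1 ^ m :=
  calc toneCoeff m ≤ (m : ℝ) ^ m / m ! := by
        unfold toneCoeff
        gcongr
        exact m.le_succ
    _ ≤ exp m := pow_div_factorial_le_exp m m.cast_nonneg m
    _ = exp 1 ^ m := by rw [← exp_nat_mul, mul_one]

theorem ofReal_inv_exp_one_le_radius_ofScalars_toneCoeff :
    ENNReal.ofReal (exp 1)⁻¹ ≤ (ofScalars ℝ toneCoeff).radius := by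
  refine ENNReal.le_of_forall_nnreal_lt fun r hr ↦ le_radius_of_bound _ 1 fun n ↦ ?_
  have hr : exp 1 * r ≤ 1 := by
    rw [← le_div_iff₀' (exp_pos 1), one_div]
    exact (ENNReal.coe_lt_ofReal.mp hr).le
  calc ‖ofScalars ℝ toneCoeff n‖ * (r : ℝ) ^ n = toneCoeff n * r ^ n := by
        rw [ofScalars_norm, norm_of_nonneg (toneCoeff_nonneg n)]
    _ ≤ exp 1 ^ n * r ^ n := by gcongr; exact toneCoeff_le_exp_one_pow n
    _ = (exp 1 * r) ^ n := (mul_pow _ _ _).symm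
    _ ≤ 1 := pow_le_one₀ (by positivity) hr

theorem mem_eball_radius_ofScalars_toneCoeff {z : ℝ} (hz : |z| < (exp 1)⁻¹) :
    z ∈ Metric.eball 0 (ofScalars ℝ toneCoeff).radius := by
  refine Metric.eball_subset_eball ofReal_inv_exp_one_le_radius_ofScalars_toneCoeff ?_
  rwa [Metric.eball_ofReal, mem_ball_zero_iff, norm_eq_abs]

theorem summable_toneCoeff_mul_pow {z : ℝ} (hz : |z| < (exp 1)⁻¹) :
    Summable fun m ↦ toneCoeff m * z ^ m := by
  simpa [ofScalars_apply_eq, mul_comm] using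
    (ofScalars ℝ toneCoeff).summable (mem_eball_radius_ofScalars_toneCoeff hz)

theorem Tone_eq_mul_tsum {z : ℝ} (hz : |z| < (exp 1)⁻¹) :
    Tone z = z * ∑' m, toneCoeff m * z ^ m := by
  rw [(summable_toneCoeff_mul_pow hz).tsum_eq_zero_add, Tone, mul_add, ← tsum_mul_left]
  congr 1
  · simp [toneCoeff]
  · refine tsum_congr fun n ↦ ?_
    rw [toneCoeff]
    push_cast
    ring

theorem analyticOnNhd_Tone : AnalyticOnNhd ℝ Tone (Metric.ball 0 (exp 1)⁻¹) := by
  have hpos : 0 < (ofScalars ℝ toneCoeff).radius :=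
    (ENNReal.ofReal_pos.mpr (by positivity)).trans_le
      ofReal_inv_exp_one_le_radius_ofScalars_toneCoeff
  refine fun z hz ↦ ?_
  have hsum := ((ofScalars ℝ toneCoeff).hasFPowerSeriesOnBall hpos).analyticAt_of_mem
    (mem_eball_radius_ofScalars_toneCoeff (by rwa [mem_ball_zero_iff, norm_eq_abs] at hz))
  refine (analyticAt_id.mul hsum).congr ?_
  filter_upwards [Metric.isOpen_ball.mem_nhds hz] with w hw
  rw [mem_ball_zero_iff, norm_eq_abs] at hw
  show w * ofScalarsSum toneCoeff w = Tone w
  simp only [Tone_eq_mul_tsum hw, ofScalars_sum_eq, smul_eq_mul]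

theorem HasSum.sum_antidiagonal {A α : Type*} [AddMonoid A] [HasAntidiagonal A]
    [AddCommMonoid α] [TopologicalSpace α] [ContinuousAdd α] [RegularSpace α]
    {f : A × A → α} {a : α} (h : HasSum f a) :
    HasSum (fun n ↦ ∑ p ∈ antidiagonal n, f p) a :=
  (HasAntidiagonal.sigmaAntidiagonalEquivProd.hasSum_iff.mpr h).sigma
    fun n ↦ (antidiagonal n).hasSum f

theorem hasSum_pow_succ_div_factorial (x : ℝ) :
    HasSum (fun n ↦ x ^ (n + 1) / (n + 1)!) (exp x - 1) := by
  have h := (hasSum_nat_add_iff' 1).mpr (NormedSpace.expSeries_div_hasSum_exp x)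
  simpa [← Real.exp_eq_exp_ℝ] using h

noncomputable def toneExpTerm (s : ℝ) (p : ℕ × ℕ) : ℝ :=
  toneCoeff p.1 * s ^ (p.1 + 1) * ((-(p.1 + 1) * s) ^ p.2 / p.2 !)

theorem exp_neg_pow_succ (s : ℝ) (m : ℕ) : exp (-s) ^ (m + 1) = exp (-(m + 1) * s) := by
  rw [← exp_nat_mul]
  push_cast
  ring_nf

theorem hasSum_toneExpTerm_fiber (s : ℝ) (m : ℕ) :
    HasSum (fun k ↦ toneExpTerm s (m, k)) (toneCoeff m * (s * exp (-s)) ^ (m + 1)) := by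
  have h := (NormedSpace.expSeries_div_hasSum_exp (-(m + 1) * s)).mul_left
    (toneCoeff m * s ^ (m + 1))
  rwa [← Real.exp_eq_exp_ℝ, ← exp_neg_pow_succ, mul_assoc, ← mul_pow] at h

theorem hasSum_abs_toneExpTerm_fiber (s : ℝ) (m : ℕ) :
    HasSum (fun k ↦ |toneExpTerm s (m, k)|) (toneCoeff m * (|s| * exp |s|) ^ (m + 1)) := by
  have h := (NormedSpace.expSeries_div_hasSum_exp ((m + 1) * |s|)).mul_left
    (toneCoeff m * |s| ^ (m + 1))
  have hexp : exp ((m + 1) * |s|) = exp |s| ^ (m + 1) := by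
    rw [← exp_nat_mul]
    push_cast
    ring_nf
  have hterm (k : ℕ) :
      |toneExpTerm s (m, k)| = toneCoeff m * |s| ^ (m + 1) * (((m + 1) * |s|) ^ k / k !) := by
    simp only [toneExpTerm, abs_mul, abs_div, abs_pow, abs_neg, abs_of_nonneg (toneCoeff_nonneg m),
      Nat.abs_cast, abs_of_nonneg (by positivity : (0 : ℝ) ≤ m + 1)]
  rw [funext hterm, mul_pow, ← mul_assoc, ← hexp, Real.exp_eq_exp_ℝ]
  exact h

theorem summable_toneExpTerm {s : ℝ} (hs : |s| * exp |s| < (exp 1)⁻¹) :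
    Summable (toneExpTerm s) := by
  have hz : |(|s| * exp |s|)| < (exp 1)⁻¹ := by
    rwa [abs_of_nonneg (by positivity : 0 ≤ |s| * exp |s|)]
  have hrows : Summable fun m ↦ toneCoeff m * (|s| * exp |s|) ^ (m + 1) := by
    refine ((summable_toneCoeff_mul_pow hz).mul_right (|s| * exp |s|)).congr fun m ↦ ?_
    ring
  refine Summable.of_abs ((summable_prod_of_nonneg fun _ ↦ abs_nonneg _).mpr
    ⟨fun m ↦ (hasSum_abs_toneExpTerm_fiber s m).summable, ?_⟩)
  simpa only [(hasSum_abs_toneExpTerm_fiber s _).tsum_eq] using hrows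

theorem sum_antidiagonal_toneExpTerm (s : ℝ) (n : ℕ) :
    ∑ p ∈ antidiagonal n, toneExpTerm s p = -((-s) ^ (n + 1) / (n + 1)!) := by
  have hterm : ∀ p ∈ antidiagonal n,
      toneExpTerm s p = toneCoeff p.1 * (-(p.1 + 1 : ℝ)) ^ p.2 / p.2 ! * s ^ (n + 1) := by
    rintro ⟨m, k⟩ hp
    rw [HasAntidiagonal.mem_antidiagonal] at hp
    subst hp
    simp only [toneExpTerm, mul_pow]
    ring
  rw [sum_congr rfl hterm, ← sum_mul, sum_antidiagonal_toneCoeff_mul_neg_pow, neg_pow, pow_succ]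
  ring

theorem Tone_mul_exp_neg_of_abs_mul_exp_abs_lt {s : ℝ} (hs : |s| * exp |s| < (exp 1)⁻¹) :
    Tone (s * exp (-s)) = 1 - exp (-s) := by
  have hz : |s * exp (-s)| < (exp 1)⁻¹ := by
    refine lt_of_le_of_lt ?_ hs
    rw [abs_mul, abs_of_pos (exp_pos _)]
    gcongr
    exact neg_le_abs s
  have hsum := (summable_toneExpTerm hs).hasSum
  have hrows := hsum.prod_fiberwise (hasSum_toneExpTerm_fiber s)
  have hdiags := hsum.sum_antidiagonal
  simp_rw [sum_antidiagonal_toneExpTerm] at hdiags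
  have hexp := (hasSum_pow_succ_div_factorial (-s)).neg
  calc Tone (s * exp (-s)) = ∑' m, toneCoeff m * (s * exp (-s)) ^ (m + 1) := by
        rw [Tone_eq_mul_tsum hz, ← tsum_mul_left]
        exact tsum_congr fun m ↦ by ring
    _ = -(exp (-s) - 1) := hrows.tsum_eq.trans (hdiags.unique hexp)
    _ = 1 - exp (-s) := by ring

theorem mul_exp_neg_lt_inv_exp_one {s : ℝ} (h : s ≠ 1) : s * exp (-s) < (exp 1)⁻¹ := by
  have hlt : s < exp (s - 1) := by linarith [add_one_lt_exp (sub_ne_zero.mpr h)]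
  calc s * exp (-s) < exp (s - 1) * exp (-s) := by gcongr
    _ = (exp 1)⁻¹ := by rw [← exp_add, ← exp_neg]; ring_nf

/-- For `0 ≤ s < 1`, `T_1(s·e^{−s}) = 1 − e^{−s}`. -/
theorem stmt_12 (s : ℝ) (h0 : 0 ≤ s) (h1 : s < 1) :
    Tone (s * Real.exp (-s)) = 1 - Real.exp (-s) := by
  have hexp : AnalyticOnNhd ℝ (fun x : ℝ ↦ exp (-x)) (Set.Ico 0 1) :=
    fun x _ ↦ analyticAt_rexp.comp analyticAt_id.neg
  have hlhs : AnalyticOnNhd ℝ (fun x ↦ Tone (x * exp (-x))) (Set.Ico 0 1) := by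
    refine fun x hx ↦ (analyticOnNhd_Tone _ ?_).comp (analyticAt_id.mul (hexp x hx))
    rw [mem_ball_zero_iff, norm_of_nonneg (mul_nonneg hx.1 (exp_pos _).le)]
    exact mul_exp_neg_lt_inv_exp_one hx.2.ne
  have hnear : ∀ᶠ x in 𝓝 0, |x| * exp |x| < (exp 1)⁻¹ :=
    (continuous_abs.mul (continuous_exp.comp continuous_abs)).continuousAt.eventually_lt
      continuousAt_const (by simp [exp_pos])
  refine hlhs.eqOn_of_preconnected_of_eventuallyEq (fun x hx ↦ analyticAt_const.sub (hexp x hx))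
    isPreconnected_Ico ⟨le_rfl, one_pos⟩ ?_ ⟨h0, h1⟩
  exact hnear.mono fun x hx ↦ Tone_mul_exp_neg_of_abs_mul_exp_abs_lt hx
end
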